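/- arXiv:1701.07231 — 4 statements merged into one kernel-verified Lean document; each statement's English description precedes it below -/
import Mathlib

section
/- Define P_min(N) for N ≥ 1 with canonical decomposition N = 3s²+3s+1+(s+1)k+j (0 ≤ k ≤ 5, 0 ≤ j ≤ s) by P_min(N) = 6s if k = j = 0 and P_min(N) = 6s+k+1 otherwise. Then for every n ≥ 3, the maximum of the set {N ∈ ℕ : P_min(N) = n} equals a_n, where a_{6s} = 3s²+3s+1 and a_{6s+k+1} = 3s²+3s+1+(s+1)k+s for k ∈ {0,1,2,3,4}. -/
/-- The sequence `a_n`. -/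
def hrA (n : ℕ) : ℕ :=
  let s := n / 6
  if n % 6 = 0 then 3 * s ^ 2 + 3 * s + 1
  else 3 * s ^ 2 + 3 * s + 1 + (s + 1) * (n % 6 - 1) + s

lemma hrA_mod0 (n : ℕ) (h : n % 6 = 0) : hrA n = 3 * (n / 6) ^ 2 + 3 * (n / 6) + 1 := by
  simp [hrA, h]

lemma hrA_modpos (n : ℕ) (h : n % 6 ≠ 0) :
    hrA n = 3 * (n / 6) ^ 2 + 3 * (n / 6) + 1 + (n / 6 + 1) * (n % 6 - 1) + n / 6 := by
  simp [hrA, h]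

lemma hr_decomp (N : ℕ) (hN : 0 < N) :
    ∃ s k j : ℕ, k ≤ 5 ∧ j ≤ s ∧ N = 3 * s ^ 2 + 3 * s + 1 + (s + 1) * k + j := by
  have hQ0 : 3 * 0 ^ 2 + 3 * 0 + 1 ≤ N := by omega
  set s := Nat.findGreatest (fun s => 3 * s ^ 2 + 3 * s + 1 ≤ N) N with hs
  have hQs : 3 * s ^ 2 + 3 * s + 1 ≤ N :=
    Nat.findGreatest_spec (P := fun s => 3 * s ^ 2 + 3 * s + 1 ≤ N) (Nat.zero_le N) hQ0
  have hub : N < 3 * (s + 1) ^ 2 + 3 * (s + 1) + 1 := by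
    by_contra h
    push_neg at h
    have hle : s + 1 ≤ N := by nlinarith
    have := Nat.le_findGreatest (P := fun s => 3 * s ^ 2 + 3 * s + 1 ≤ N) hle h
    omega
  have hexp : 3 * (s + 1) ^ 2 + 3 * (s + 1) + 1 = 3 * s ^ 2 + 3 * s + 1 + (6 * s + 6) := by
    ring
  set r := N - (3 * s ^ 2 + 3 * s + 1) with hr
  have hrb : r < 6 * (s + 1) := by omega
  refine ⟨s, r / (s + 1), r % (s + 1), ?_, ?_, ?_⟩
  · have : r / (s + 1) < 6 := Nat.div_lt_of_lt_mul (by omega)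
    omega
  · have : r % (s + 1) < s + 1 := Nat.mod_lt _ (by omega)
    omega
  · have := Nat.div_add_mod r (s + 1)
    omega

theorem max_particle_number_with_perimeter
    (P : ℕ → ℕ)
    (hP : ∀ N s k j : ℕ, k ≤ 5 → j ≤ s →
      N = 3 * s ^ 2 + 3 * s + 1 + (s + 1) * k + j →
      P N = if k = 0 ∧ j = 0 then 6 * s else 6 * s + k + 1)
    (n : ℕ) (hn : 3 ≤ n) :
    sSup {N : ℕ | 0 < N ∧ P N = n} = hrA n := by
  have hmem : hrA n ∈ {N : ℕ | 0 < N ∧ P N = n} := by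
    by_cases h0 : n % 6 = 0
    · rw [Set.mem_setOf_eq, hrA_mod0 n h0]
      constructor
      · positivity
      · have := hP (3 * (n / 6) ^ 2 + 3 * (n / 6) + 1) (n / 6) 0 0 (by omega) (by omega)
          (by ring)
        simp at this
        omega
    · rw [Set.mem_setOf_eq, hrA_modpos n h0]
      set s := n / 6 with hsdef
      set k := n % 6 - 1 with hkdef
      have hk5 : k ≤ 4 := by omega
      have hnot : ¬ (k = 0 ∧ s = 0) := by
        rintro ⟨hk0, hs0⟩
        omega
      constructor
      · positivity
      · have := hP (3 * s ^ 2 + 3 * s + 1 + (s + 1) * k + s) s k s (by omega) le_rfl rfl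
        rw [if_neg hnot] at this
        omega
  have hub : ∀ N ∈ {N : ℕ | 0 < N ∧ P N = n}, N ≤ hrA n := by
    rintro N ⟨hNpos, hPN⟩
    obtain ⟨s, k, j, hk, hj, hN⟩ := hr_decomp N hNpos
    have hval := hP N s k j hk hj hN
    by_cases hkj : k = 0 ∧ j = 0
    · obtain ⟨rfl, rfl⟩ := hkj
      rw [if_pos ⟨rfl, rfl⟩] at hval
      have hn6 : n = 6 * s := by omega
      have h0 : n % 6 = 0 := by omega
      have hd : n / 6 = s := by omega
      rw [hrA_mod0 n h0, hd]
      omega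
    · rw [if_neg hkj] at hval
      have hn6 : n = 6 * s + k + 1 := by omega
      by_cases hk5 : k = 5
      · have h0 : n % 6 = 0 := by omega
        have hd : n / 6 = s + 1 := by omega
        rw [hrA_mod0 n h0, hd]
        have he : 3 * (s + 1) ^ 2 + 3 * (s + 1) + 1 = 3 * s ^ 2 + 9 * s + 7 := by ring
        have he2 : (s + 1) * k = 5 * s + 5 := by rw [hk5]; ring
        omega
      · have h0 : n % 6 = k + 1 := by omega
        have h0' : n % 6 ≠ 0 := by omega
        have hd : n / 6 = s := by omega
        rw [hrA_modpos n h0', hd, h0]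
        simp only [Nat.add_sub_cancel]
        omega
  exact le_antisymm (csSup_le ⟨hrA n, hmem⟩ hub) (le_csSup ⟨hrA n, hub⟩ hmem)
end

section
/- The function P_min defined by P_min(N) = 6s if N = 3s²+3s+1, and P_min(N) = 6s+k+1 if N = 3s²+3s+1+(s+1)k+j with (k,j) ≠ (0,0), 0 ≤ k ≤ 5, 1 ≤ j ≤ s or k ≥ 1, 0 ≤ j ≤ s, is monotone nondecreasing in N. -/
theorem Pmin_monotone
    (P : ℕ → ℕ)
    (hP : ∀ N s k j : ℕ, k ≤ 5 → j ≤ s →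
      N = 3 * s ^ 2 + 3 * s + 1 + (s + 1) * k + j →
      P N = if k = 0 ∧ j = 0 then 6 * s else 6 * s + k + 1) :
    ∀ M N : ℕ, 0 < M → M ≤ N → P M ≤ P N := by
  have hdec : ∀ n : ℕ, ∃ s k j : ℕ, k ≤ 5 ∧ j ≤ s ∧
      n + 1 = 3 * s ^ 2 + 3 * s + 1 + (s + 1) * k + j := by
    intro n
    induction n with
    | zero => exact ⟨0, 0, 0, by norm_num, le_refl _, by norm_num⟩
    | succ m ih =>
      obtain ⟨s, k, j, hk, hj, heq⟩ := ih
      rcases lt_or_eq_of_le hj with hlt | hje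
      · exact ⟨s, k, j + 1, hk, hlt, by omega⟩
      · rcases lt_or_eq_of_le hk with hk5 | hk5
        · refine ⟨s, k + 1, 0, by omega, Nat.zero_le _, ?_⟩
          subst hje
          rw [show m + 1 + 1 = (m + 1) + 1 from rfl, heq]; ring
        · refine ⟨s + 1, 0, 0, by norm_num, Nat.zero_le _, ?_⟩
          subst hje; subst hk5
          rw [show m + 1 + 1 = (m + 1) + 1 from rfl, heq]; ring
  have hstep : ∀ n : ℕ, P (n + 1) ≤ P (n + 2) := by
    intro n
    obtain ⟨s, k, j, hk, hj, heq⟩ := hdec n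
    rcases lt_or_eq_of_le hj with hlt | hje
    · have h1 := hP (n + 1) s k j hk hj heq
      have h2 := hP (n + 2) s k (j + 1) hk hlt (by omega)
      rw [h1, h2]; split_ifs <;> simp_all <;> omega
    · rcases lt_or_eq_of_le hk with hk5 | hk5
      · have h1 := hP (n + 1) s k j hk hj heq
        have h2 := hP (n + 2) s (k + 1) 0 (by omega) (Nat.zero_le _) (by
          subst hje
          rw [show n + 2 = (n + 1) + 1 from rfl, heq]; ring)
        rw [h1, h2]; split_ifs <;> simp_all <;> omega
      · have h1 := hP (n + 1) s k j hk hj heq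
        have h2 := hP (n + 2) (s + 1) 0 0 (by norm_num) (Nat.zero_le _) (by
          subst hje; subst hk5
          rw [show n + 2 = (n + 1) + 1 from rfl, heq]; ring)
        rw [h1, h2]; split_ifs <;> simp_all <;> omega
  intro M N hM hMN
  induction N, hMN using Nat.le_induction with
  | base => exact le_refl _
  | succ n hn ih =>
    have hn1 : 1 ≤ n := le_trans hM hn
    obtain ⟨m, rfl⟩ : ∃ m, n = m + 1 := ⟨n - 1, by omega⟩
    exact le_trans ih (hstep m)
end

section
/- The number of nonnegative integer solutions of x + 2y + 3z = n equals round((n+3)²/12), the nearest integer to (n+3)²/12. -/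
/-- The number of nonnegative integer solutions of `x + 2y + 3z = n`. -/
noncomputable def dioCount (n : ℕ) : ℕ :=
  Nat.card {t : ℕ × ℕ × ℕ // t.1 + 2 * t.2.1 + 3 * t.2.2 = n}


instance dioFin (n : ℕ) : Finite {t : ℕ × ℕ × ℕ // t.1 + 2 * t.2.1 + 3 * t.2.2 = n} := by
  apply Finite.of_injective (β := Fin (n+1) × Fin (n+1) × Fin (n+1))
    (f := fun t => (⟨t.1.1, by have := t.2; omega⟩, ⟨t.1.2.1, by have := t.2; omega⟩, ⟨t.1.2.2, by have := t.2; omega⟩))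
  rintro ⟨⟨a,b,c⟩,h⟩ ⟨⟨a',b',c'⟩,h'⟩ he
  simp [Prod.ext_iff, Fin.ext_iff] at he
  simp [Prod.ext_iff, he]

def pairEquiv (m : ℕ) : {p : ℕ × ℕ // p.1 + 2 * p.2 = m} ≃ Fin (m/2+1) := {
    toFun := fun p => ⟨p.1.2, by have := p.2; omega⟩
    invFun := fun y => ⟨(m - 2 * y.1, y.1), by have := y.2; omega⟩
    left_inv := by rintro ⟨⟨a,b⟩,h⟩; simp; omega
    right_inv := by rintro ⟨y,hy⟩; simp }

instance pairFin (m : ℕ) : Finite {p : ℕ × ℕ // p.1 + 2 * p.2 = m} :=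
  Finite.of_equiv _ (pairEquiv m).symm

lemma pairCard (m : ℕ) : Nat.card {p : ℕ × ℕ // p.1 + 2 * p.2 = m} = m / 2 + 1 :=
  Nat.card_eq_of_equiv_fin (pairEquiv m)

lemma dioRec (n : ℕ) :
    Nat.card {t : ℕ × ℕ × ℕ // t.1 + 2 * t.2.1 + 3 * t.2.2 = n + 6} =
    Nat.card {t : ℕ × ℕ × ℕ // t.1 + 2 * t.2.1 + 3 * t.2.2 = n} + (n + 6) := by
  have e : {t : ℕ × ℕ × ℕ // t.1 + 2 * t.2.1 + 3 * t.2.2 = n + 6} ≃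
      ({p : ℕ × ℕ // p.1 + 2 * p.2 = n + 6} ⊕ {p : ℕ × ℕ // p.1 + 2 * p.2 = n + 3}) ⊕
      {t : ℕ × ℕ × ℕ // t.1 + 2 * t.2.1 + 3 * t.2.2 = n} := {
    toFun := fun t => match t with
      | ⟨(a, b, c), h⟩ =>
        if h0 : c = 0 then .inl (.inl ⟨(a, b), show a + 2*b = n+6 by simp at h; omega⟩)
        else if h1 : c = 1 then .inl (.inr ⟨(a, b), show a + 2*b = n+3 by simp at h; omega⟩)
        else .inr ⟨(a, b, c - 2), show a + 2*b + 3*(c-2) = n by simp at h; omega⟩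
    invFun := fun s => match s with
      | .inl (.inl ⟨(a, b), h⟩) => ⟨(a, b, 0), show a + 2*b + 3*0 = n+6 by simp at h; omega⟩
      | .inl (.inr ⟨(a, b), h⟩) => ⟨(a, b, 1), show a + 2*b + 3*1 = n+6 by simp at h; omega⟩
      | .inr ⟨(a, b, c), h⟩ => ⟨(a, b, c + 2), show a + 2*b + 3*(c+2) = n+6 by simp at h; omega⟩
    left_inv := by
      rintro ⟨⟨a,b,c⟩,h⟩
      rcases Nat.lt_or_ge c 2 with hc | hc
      · interval_cases c <;> simp
      · have h0 : ¬ c = 0 := by omega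
        have h1 : ¬ c = 1 := by omega
        simp only [h0, h1, dite_false]
        simp; omega
    right_inv := by
      rintro (⟨⟨⟨a,b⟩,h⟩|⟨⟨a,b⟩,h⟩⟩|⟨⟨a,b,c⟩,h⟩) <;> simp }
  rw [Nat.card_congr e, Nat.card_sum, Nat.card_sum, pairCard, pairCard]
  omega
lemma dioCount_eq_filter (n : ℕ) : dioCount n =
    ((Finset.range (n+1) ×ˢ Finset.range (n+1) ×ˢ Finset.range (n+1)).filter
      (fun t => t.1 + 2 * t.2.1 + 3 * t.2.2 = n)).card := by
  rw [dioCount, ← Nat.card_eq_finsetCard]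
  exact Nat.card_congr ((Equiv.subtypeEquivRight (by
    intro t; simp [Finset.mem_filter, Finset.mem_range]; omega)).symm)

lemma dioKey : ∀ n : ℕ, (dioCount n : ℤ) = (((n:ℤ)+3)^2 + 6)/12 := by
  intro n
  induction n using Nat.strong_induction_on with
  | _ n ih =>
    by_cases h : n < 6
    · interval_cases n <;>
        · rw [dioCount_eq_filter]; decide
    · obtain ⟨m, rfl⟩ : ∃ m, n = m + 6 := ⟨n - 6, by omega⟩
      have hr : dioCount (m + 6) = dioCount m + (m + 6) := dioRec m
      rw [hr]
      push_cast
      rw [ih m (by omega)]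
      have : ((m:ℤ)+6+3)^2 + 6 = (((m:ℤ)+3)^2 + 6) + ((m:ℤ)+6) * 12 := by ring
      rw [this, Int.add_mul_ediv_right _ _ (by norm_num : (12:ℤ) ≠ 0)]

theorem dioCount_closed_form (n : ℕ) :
    (dioCount n : ℤ) = round ((((n : ℚ) + 3) ^ 2) / 12) := by
  rw [dioKey, round_eq]
  have h1 : (((n:ℚ) + 3) ^ 2) / 12 + 1/2 = (((((n:ℤ)+3)^2 + 6 : ℤ)) : ℚ) / ((12:ℕ):ℚ) := by
    push_cast; ring
  rw [h1, Rat.floor_intCast_div_natCast]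
  norm_num
end

section
/- For every integer N ≥ 1, P_min(N) ≥ √(12N − 3) − 3, where P_min is defined via the canonical decomposition N = 3s²+3s+1+(s+1)k+j (0 ≤ k ≤ 5, 0 ≤ j ≤ s) by P_min(N) = 6s if k=j=0 and 6s+k+1 otherwise, with equality if and only if N is a centered hexagonal number. -/
theorem Pmin_isoperimetric (N s k j : ℕ) (hN : 1 ≤ N) (hk : k ≤ 5) (hj : j ≤ s)
    (hdec : N = 3 * s ^ 2 + 3 * s + 1 + (s + 1) * k + j) :
    (((if k = 0 ∧ j = 0 then 6 * s else 6 * s + k + 1) : ℕ) : ℝ)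
        ≥ Real.sqrt (12 * N - 3) - 3 ∧
    ((((if k = 0 ∧ j = 0 then 6 * s else 6 * s + k + 1) : ℕ) : ℝ)
        = Real.sqrt (12 * N - 3) - 3 ↔ ∃ t : ℕ, N = 3 * t ^ 2 + 3 * t + 1) := by
  by_cases h : k = 0 ∧ j = 0
  · obtain ⟨hk0, hj0⟩ := h
    subst hk0; subst hj0
    rw [if_pos ⟨rfl, rfl⟩]
    have hNe : (12 * (N : ℝ) - 3) = ((6 * s + 3 : ℝ)) ^ 2 := by
      subst hdec; push_cast; ring
    have hs : Real.sqrt (12 * (N : ℝ) - 3) = 6 * (s : ℝ) + 3 := by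
      rw [hNe, Real.sqrt_sq (by positivity)]
    refine ⟨?_, fun _ => ⟨s, by subst hdec; ring⟩, fun _ => ?_⟩
    · rw [hs]; push_cast; linarith
    · rw [hs]; push_cast; ring
  · rw [if_neg h]
    have hko : k ≠ 0 ∨ j ≠ 0 := by tauto
    have h1 : 1 ≤ (s + 1) * k + j := by
      rcases hko with hko | hko
      · have : 1 ≤ k := Nat.one_le_iff_ne_zero.mpr hko
        nlinarith
      · omega
    have hx0 : (0 : ℝ) ≤ 12 * (N : ℝ) - 3 := by
      have : (1 : ℝ) ≤ (N : ℝ) := by exact_mod_cast hN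
      linarith
    have hlt : 12 * (N : ℝ) - 3 < (6 * (s : ℝ) + (k : ℝ) + 4) ^ 2 := by
      subst hdec
      have hjs : (j : ℝ) ≤ (s : ℝ) := by exact_mod_cast hj
      push_cast
      nlinarith [sq_nonneg ((k : ℝ) - 2)]
    have hsl : Real.sqrt (12 * (N : ℝ) - 3) < 6 * (s : ℝ) + (k : ℝ) + 4 := by
      nlinarith [Real.sq_sqrt hx0, Real.sqrt_nonneg (12 * (N : ℝ) - 3)]
    have hnot : ¬ ∃ t : ℕ, N = 3 * t ^ 2 + 3 * t + 1 := by
      rintro ⟨t, ht⟩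
      have hub : (s + 1) * k + j ≤ 5 * (s + 1) + s := by
        have : (s + 1) * k ≤ (s + 1) * 5 := Nat.mul_le_mul_left _ hk
        omega
      rcases le_or_gt t s with h' | h'
      · nlinarith
      · nlinarith
    refine ⟨?_, fun heq => ?_, fun h' => absurd h' hnot⟩
    · push_cast; linarith
    · exfalso; push_cast at heq; linarith
end
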